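/- arXiv:1409.5902 — 6 statements merged into one kernel-verified Lean document; each statement's English description precedes it below -/
import Mathlib

section
/- Let K be a field of characteristic zero, let f be a nonzero polynomial over K, and let a ∈ K with a ≠ 0 be a root of f of multiplicity ν ≥ 1. Define the sequence f_0 = f and f_{k+1} = f_k − X·f_k′. Then for every k with 0 ≤ k ≤ ν, the element a is a root of f_k of multiplicity exactly ν − k (in particular f_ν(a) ≠ 0). Consequently each Padé function P_k = f_{k−1}/f_k, for 1 ≤ k ≤ ν, has a as a zero of multiplicity one. -/
open Polynomial

lemma step_lemma {K : Type*} [Field K] [CharZero K] (g : K[X]) (hg : g ≠ 0)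
    (a : K) (ha : a ≠ 0) (m : ℕ) (hm : 1 ≤ m)
    (h : Polynomial.rootMultiplicity a g = m) :
    g - X * Polynomial.derivative g ≠ 0 ∧
      Polynomial.rootMultiplicity a (g - X * Polynomial.derivative g) = m - 1 := by
  obtain ⟨s, rfl⟩ : ∃ s, m = s + 1 := ⟨m - 1, by omega⟩
  set q := g /ₘ (X - C a) ^ (s + 1) with hq
  have hgq : (X - C a) ^ (s + 1) * q = g := by
    rw [hq, ← h]; exact pow_mul_divByMonic_rootMultiplicity_eq g a
  have hqa : q.eval a ≠ 0 := by
    rw [hq, ← h]; exact eval_divByMonic_pow_rootMultiplicity_ne_zero a hg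
  set r : K[X] := (X - C a) * q - C ((s:K) + 1) * X * q - (X - C a) * X * derivative q with hr
  have key : g - X * derivative g = (X - C a) ^ s * r := by
    rw [← hgq, hr]
    have : derivative ((X - C a) ^ (s + 1) * q)
        = C ((s:K) + 1) * (X - C a) ^ s * q + (X - C a) ^ (s + 1) * derivative q := by
      rw [derivative_mul, derivative_pow, derivative_sub, derivative_X, derivative_C,
        Nat.add_sub_cancel]
      push_cast
      ring
    rw [this, pow_succ]
    ring
  have hra : r.eval a ≠ 0 := by
    simp only [hr, eval_sub, eval_mul, eval_X, eval_C, eval_pow, sub_self, zero_mul, mul_zero]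
    simp only [zero_sub, neg_ne_zero, zero_mul, sub_zero]
    refine mul_ne_zero (mul_ne_zero ?_ ha) hqa
    have : ((s:K) + 1) = ((s + 1 : ℕ) : K) := by push_cast; ring
    rw [this]
    exact Nat.cast_ne_zero.mpr (Nat.succ_ne_zero s)
  have hrne : r ≠ 0 := fun h0 => hra (by simp [h0])
  have hne : (X - C a) ^ s * r ≠ 0 :=
    mul_ne_zero (pow_ne_zero _ (X_sub_C_ne_zero a)) hrne
  rw [key]
  refine ⟨hne, ?_⟩
  rw [rootMultiplicity_mul hne, rootMultiplicity_X_sub_C_pow,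
    rootMultiplicity_eq_zero (fun hh => hra hh)]
  omega

theorem test_polynomial_root_multiplicity {K : Type*} [Field K] [CharZero K]
    (f : K[X]) (hf : f ≠ 0) (a : K) (ha : a ≠ 0) (hroot : f.IsRoot a)
    (ν : ℕ) (hν : 1 ≤ ν) (hmult : Polynomial.rootMultiplicity a f = ν) :
    (∀ k ≤ ν,
        Polynomial.rootMultiplicity a
          ((fun g : K[X] => g - X * Polynomial.derivative g)^[k] f) = ν - k) ∧
    ((fun g : K[X] => g - X * Polynomial.derivative g)^[ν] f).eval a ≠ 0 ∧
    (∀ k, 1 ≤ k → k ≤ ν →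
        Polynomial.rootMultiplicity a
          ((fun g : K[X] => g - X * Polynomial.derivative g)^[k - 1] f) =
        Polynomial.rootMultiplicity a
          ((fun g : K[X] => g - X * Polynomial.derivative g)^[k] f) + 1) := by
  set T : K[X] → K[X] := fun g => g - X * Polynomial.derivative g with hT
  have main : ∀ k ≤ ν, T^[k] f ≠ 0 ∧ Polynomial.rootMultiplicity a (T^[k] f) = ν - k := by
    intro k hk
    induction k with
    | zero => simpa using ⟨hf, hmult⟩
    | succ n ih =>
      obtain ⟨h1, h2⟩ := ih (by omega)
      have := step_lemma (T^[n] f) h1 a ha (ν - n) (by omega) h2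
      rw [Function.iterate_succ_apply']
      constructor
      · exact this.1
      · rw [this.2]; omega
  refine ⟨fun k hk => (main k hk).2, ?_, fun k hk1 hk2 => ?_⟩
  · obtain ⟨h1, h2⟩ := main ν le_rfl
    have : Polynomial.rootMultiplicity a (T^[ν] f) = 0 := by omega
    intro hev
    have := (rootMultiplicity_pos h1).mpr hev
    omega
  · rw [(main k hk2).2, (main (k-1) (by omega)).2]; omega
end

section
/- Let F be an n × n matrix with entries in ℂ[X] (a polynomial matrix), and let a ∈ ℂ be a root of the characteristic polynomial det F of multiplicity exactly one. Then the complex matrix F(a), obtained by evaluating every entry of F at a, has rank n − 1. -/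
open Polynomial Matrix

private lemma rootMultiplicity_pow_aux {p : Polynomial ℂ} (hp : p ≠ 0) (a : ℂ) (k : ℕ) :
    Polynomial.rootMultiplicity a (p ^ k) = k * Polynomial.rootMultiplicity a p := by
  induction k with
  | zero => simp [Polynomial.rootMultiplicity_eq_zero, Polynomial.IsRoot]
  | succ k ih =>
    rw [pow_succ, Polynomial.rootMultiplicity_mul (mul_ne_zero (pow_ne_zero _ hp) hp), ih]
    ring

theorem rank_of_simple_eigenvalue {n : ℕ}
    (F : Matrix (Fin n) (Fin n) (Polynomial ℂ)) (a : ℂ)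
    (ha : Polynomial.rootMultiplicity a F.det = 1) :
    (F.map (fun p => p.eval a)).rank = n - 1 := by
  rcases Nat.eq_zero_or_pos n with h0 | hn
  · subst h0
    have := Matrix.rank_le_card_width (F.map (fun p => p.eval a))
    simp only [Fintype.card_fin] at this
    omega
  have hFdet : F.det ≠ 0 := by
    intro h
    rw [h, Polynomial.rootMultiplicity_zero] at ha
    exact zero_ne_one ha
  have hroot : F.det.eval a = 0 :=
    (Polynomial.rootMultiplicity_pos hFdet).mp (by omega)
  set B : Matrix (Fin n) (Fin n) ℂ := F.map (fun p => p.eval a) with hB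
  have hmap : B = (Polynomial.evalRingHom a).mapMatrix F := by
    ext i j; simp [hB]
  have hdetB : B.det = 0 := by
    rw [hmap, ← RingHom.map_det]
    simpa using hroot
  -- upper bound : rank B ≤ n - 1
  have hub : B.rank ≤ n - 1 := by
    obtain ⟨v, hv0, hv⟩ := Matrix.exists_mulVec_eq_zero_iff.mpr hdetB
    have hker : v ∈ LinearMap.ker B.mulVecLin := by
      simpa [Matrix.mulVecLin_apply] using hv
    have hkpos : 0 < Module.finrank ℂ (LinearMap.ker B.mulVecLin) := by
      rw [Module.finrank_pos_iff]
      exact ⟨⟨⟨v, hker⟩, 0, by simpa [Subtype.ext_iff] using hv0⟩⟩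
    have hrn := LinearMap.finrank_range_add_finrank_ker B.mulVecLin
    have hfr : Module.finrank ℂ (Fin n → ℂ) = n := by simp
    have hrank : B.rank = Module.finrank ℂ (LinearMap.range B.mulVecLin) := rfl
    omega
  -- adjugate B ≠ 0
  have hadj : B.adjugate ≠ 0 := by
    intro h
    have hdvd : ∀ i j, (X - C a) ∣ F.adjugate i j := by
      intro i j
      rw [Polynomial.dvd_iff_isRoot]
      have h1 : B.adjugate = (F.adjugate).map (fun p => p.eval a) := by
        rw [hmap, ← RingHom.map_adjugate]
        rfl
      have := congrFun (congrFun (h1.symm.trans h) i) j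
      simpa using this
    choose G hG using hdvd
    have hAF : F.adjugate = (X - C a) • Matrix.of G := by
      ext i j
      simp [(hG i j).symm]
    have hdet := Matrix.det_adjugate F
    rw [hAF, Matrix.det_smul, Fintype.card_fin] at hdet
    have hdvd2 : (X - C a) ^ n ∣ F.det ^ (n - 1) := ⟨(Matrix.of G).det, hdet.symm⟩
    have hpow : F.det ^ (n - 1) ≠ 0 := pow_ne_zero _ hFdet
    have hle := (Polynomial.le_rootMultiplicity_iff hpow).mpr hdvd2
    rw [rootMultiplicity_pow_aux hFdet, ha, mul_one] at hle
    omega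
  obtain ⟨i, j, hij⟩ : ∃ i j, B.adjugate i j ≠ 0 := by
    by_contra h
    push_neg at h
    exact hadj (by ext i j; simpa using h i j)
  set Cm : Matrix (Fin n) (Fin n) ℂ := B.updateRow j (Pi.single i 1) with hCm
  have hdetC : Cm.det ≠ 0 := by rwa [← Matrix.adjugate_apply]
  have hCu : IsUnit Cm := (Matrix.isUnit_iff_isUnit_det Cm).mpr (isUnit_iff_ne_zero.mpr hdetC)
  have hrC : Cm.rank = n := by rw [Matrix.rank_of_isUnit Cm hCu, Fintype.card_fin]
  have hspan : Submodule.span ℂ (Set.range Cm) ≤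
      Submodule.span ℂ {(Pi.single i 1 : Fin n → ℂ)} ⊔ Submodule.span ℂ (Set.range B) := by
    rw [← Submodule.span_union]
    apply Submodule.span_mono
    rintro _ ⟨k, rfl⟩
    by_cases hk : k = j
    · subst hk
      left
      simp [hCm, Matrix.updateRow_self]
    · right
      exact ⟨k, (Matrix.updateRow_ne hk).symm⟩
  have key : n ≤ 1 + B.rank := by
    have e1 : Cm.rank = Module.finrank ℂ (Submodule.span ℂ (Set.range Cm)) :=
      Matrix.rank_eq_finrank_span_row Cm
    have e2 : B.rank = Module.finrank ℂ (Submodule.span ℂ (Set.range B)) :=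
      Matrix.rank_eq_finrank_span_row B
    have l1 : Module.finrank ℂ (Submodule.span ℂ (Set.range Cm)) ≤
        Module.finrank ℂ ((Submodule.span ℂ {(Pi.single i 1 : Fin n → ℂ)} ⊔
          Submodule.span ℂ (Set.range B) : Submodule ℂ (Fin n → ℂ))) :=
      Submodule.finrank_mono hspan
    have l2 := Submodule.finrank_add_le_finrank_add_finrank
      (Submodule.span ℂ {(Pi.single i 1 : Fin n → ℂ)}) (Submodule.span ℂ (Set.range B))
    have l3 : Module.finrank ℂ (Submodule.span ℂ {(Pi.single i 1 : Fin n → ℂ)}) = 1 :=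
      finrank_span_singleton (by
        intro h
        have := congrFun h i
        simp at this)
    omega
  omega
end

section
/- Let F be an n × n matrix with entries in ℂ[X] such that det F is not the zero polynomial, and let a ∈ ℂ. Then the rank deficiency of the evaluated matrix satisfies n − rank(F(a)) ≤ ν, where ν is the multiplicity of a as a root of det F. (In particular, the rank deficiency r_k of F(λ_k) at an eigenvalue λ_k of multiplicity ν_k satisfies r_k ≤ ν_k.) -/
open Polynomial Matrix

/-!
Over a field, `F(a)` has a rank normal form `V * F(a) * U = diag(1, 0)` with `V`, `U` invertible
constant matrices. The polynomial matrix `V * F * U` then has `n - rank F(a)` columns vanishing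
at `a`, hence divisible by `X - a`, so `(X - a) ^ (n - rank F(a))` divides its determinant, which
is `det F` up to a unit.
-/

namespace Matrix

theorem pow_card_dvd_det_of_dvd_cols {R ι : Type*} [CommRing R] [Fintype ι] [DecidableEq ι]
    (A : Matrix ι ι R) (p : R) (S : Finset ι) (h : ∀ j ∈ S, ∀ i, p ∣ A i j) :
    p ^ S.card ∣ A.det := by
  choose! B hB using h
  have hA : A = of (fun i j => if j ∈ S then B j i else A i j) *
      diagonal (fun j => if j ∈ S then p else 1) := by
    ext i j
    by_cases hj : j ∈ S
    · simp [hj, hB j hj i, mul_comm]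
    · simp [hj]
  rw [hA, det_mul, det_diagonal, Finset.prod_ite_mem, Finset.univ_inter, Finset.prod_const]
  exact dvd_mul_left _ _

theorem X_sub_C_pow_card_sub_rank_dvd_det {K ι : Type*} [Field K] [Fintype ι] [DecidableEq ι]
    (F : Matrix ι ι K[X]) (a : K) :
    (X - C a) ^ (Fintype.card ι - (F.map (eval a)).rank) ∣ F.det := by
  obtain ⟨V, U, e, hV, hU, hVU⟩ := exists_rank_normal_form (F.map (eval a))
  set G := V.map C * F * U.map C
  have hG : G.map (eval a) = (fromBlocks 1 0 0 0).submatrix e e := by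
    rw [← hVU]
    simp only [G, ← coe_evalRingHom, Matrix.map_mul, Matrix.map_map]
    simp [Function.comp_def]
  set S := Finset.univ.map (Function.Embedding.inr.trans e.symm.toEmbedding)
  have hS : (X - C a) ^ S.card ∣ G.det := by
    refine pow_card_dvd_det_of_dvd_cols G _ S fun j hj i => dvd_iff_isRoot.mpr ?_
    obtain ⟨k, -, rfl⟩ := Finset.mem_map.mp hj
    have hcol := congrFun (congrFun hG i) (e.symm (.inr k))
    rcases h : e i <;> simp_all
  have hunit : IsUnit (C V.det * C U.det) :=
    ((isUnit_iff_isUnit_det V).mp hV).map C |>.mul (((isUnit_iff_isUnit_det U).mp hU).map C)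
  rw [Finset.card_map, Finset.card_univ, Fintype.card_fin] at hS
  have hdet : G.det = F.det * (C V.det * C U.det) := by
    simp only [G, det_mul, RingHom.map_det, RingHom.mapMatrix_apply]
    ring
  rwa [hdet, hunit.dvd_mul_right] at hS

end Matrix

theorem rank_deficiency_le_multiplicity {n : ℕ}
    (F : Matrix (Fin n) (Fin n) (Polynomial ℂ)) (hF : F.det ≠ 0) (a : ℂ) :
    n - (F.map (fun p => p.eval a)).rank ≤ Polynomial.rootMultiplicity a F.det :=
  (le_rootMultiplicity_iff hF).mpr (by simpa using X_sub_C_pow_card_sub_rank_dvd_det F a)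
end

section
/- Let f ∈ ℂ[X] have degree m ≥ 1 with leading coefficient a_m, and let σ_1, …, σ_m ∈ ℂ be pairwise distinct interpolation values. Define the defects d_k = f(σ_k) / (a_m · ∏_{j ≠ k} (σ_k − σ_j)) and the accompanying ECP matrix E = Diag(σ) − 1·dᵀ. Then for every λ ∈ ℂ, det(E − λ·I_m) = (−1)^m · f(λ)/a_m; equivalently, the characteristic polynomial det(λ·I_m − E) of E equals f/a_m, so the eigenvalues of E are exactly the zeros of f (with multiplicities). -/
/-!
Over `ℂ[X]` the characteristic matrix of `E` is `Diag(X - σ) + 1·dᵀ`, so the matrix determinant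
lemma gives `χ_E = ∏ⱼ (X - σⱼ) + ∑ₖ dₖ ∏_{j ≠ k} (X - σⱼ)`. At `X = σₖ` only the `k`-th summand
survives, and by the choice of the defects its value is `f(σₖ) / aₘ`. Hence `χ_E` and `f / aₘ` are
monic of degree `m` and agree at the `m` distinct points `σₖ`, so they are equal; finally
`det(E - λ I) = (-1)ᵐ χ_E(λ)`.
-/

open Matrix Polynomial BigOperators

namespace Matrix

variable {n : Type*} [Fintype n] [DecidableEq n]

private theorem det_diagonal_add_replicateRow_of_field {K : Type*} [Field K] (c e : n → K)
    (hc : ∀ j, c j ≠ 0) :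
    (diagonal c + replicateRow n e).det = ∏ j, c j + ∑ k, e k * ∏ j ∈ Finset.univ.erase k, c j := by
  have hdet : IsUnit (diagonal c).det := by
    rw [det_diagonal]
    exact (Finset.prod_ne_zero_iff.mpr fun j _ => hc j).isUnit
  have hinv : (diagonal c)⁻¹ = diagonal fun j => (c j)⁻¹ :=
    inv_eq_right_inv (by simp [hc])
  have hrank_one : replicateRow n e = replicateCol Unit (1 : n → K) * replicateRow Unit e := by
    ext i j
    simp [mul_apply]
  rw [hrank_one, det_add_replicateCol_mul_replicateRow hdet, hinv, det_diagonal]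
  simp only [det_unique, add_apply, one_apply_eq, mul_apply, replicateRow_apply, diagonal_apply,
    mul_ite, mul_zero, Finset.sum_ite_eq', Finset.mem_univ, if_true, replicateCol_apply,
    Pi.one_apply, mul_one]
  rw [mul_add, mul_one, Finset.mul_sum]
  refine congrArg _ (Finset.sum_congr rfl fun k _ => ?_)
  rw [← Finset.mul_prod_erase _ _ (Finset.mem_univ k)]
  field_simp [hc k]

theorem det_diagonal_add_replicateRow {R : Type*} [CommRing R] [IsDomain R] (c e : n → R)
    (hc : ∀ j, c j ≠ 0) :
    (diagonal c + replicateRow n e).det = ∏ j, c j + ∑ k, e k * ∏ j ∈ Finset.univ.erase k, c j := by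
  let ι := algebraMap R (FractionRing R)
  have hι : Function.Injective ι := IsFractionRing.injective R (FractionRing R)
  have hK := det_diagonal_add_replicateRow_of_field (ι ∘ c) (ι ∘ e)
    fun j => (map_ne_zero_iff ι hι).mpr (hc j)
  apply hι
  rw [RingHom.map_det, map_add, RingHom.mapMatrix_apply, RingHom.mapMatrix_apply,
    diagonal_map (map_zero ι)]
  convert hK using 3 <;> first | rfl | simp [ι]

theorem charpoly_diagonal_sub_replicateRow {R : Type*} [CommRing R] [IsDomain R] (σ d : n → R) :
    (diagonal σ - replicateRow n d).charpoly =
      Lagrange.nodal Finset.univ σ + ∑ k, C (d k) * Lagrange.nodal (Finset.univ.erase k) σ := by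
  have hcharmatrix : charmatrix (diagonal σ - replicateRow n d) =
      diagonal (fun j => X - C (σ j)) + replicateRow n (fun j => C (d j)) := by
    ext i j : 1
    by_cases h : i = j
    · subst h
      simp only [charmatrix_apply_eq, sub_apply, diagonal_apply_eq, replicateRow_apply, map_sub,
        add_apply]
      ring
    · simp [h]
  rw [charpoly, hcharmatrix, det_diagonal_add_replicateRow _ _ fun j => X_sub_C_ne_zero (σ j)]
  simp [Lagrange.nodal]

theorem eval_charpoly_diagonal_sub_replicateRow_self {R : Type*} [CommRing R] [IsDomain R]
    (σ d : n → R) (k : n) :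
    (diagonal σ - replicateRow n d).charpoly.eval (σ k) =
      d k * ∏ j ∈ Finset.univ.erase k, (σ k - σ j) := by
  rw [charpoly_diagonal_sub_replicateRow, eval_add, Lagrange.eval_nodal_at_node (Finset.mem_univ k),
    zero_add, eval_finsetSum, Finset.sum_eq_single k]
  · simp [Lagrange.eval_nodal]
  · intro i _ hik
    rw [eval_mul, Lagrange.eval_nodal_at_node (Finset.mem_erase.mpr ⟨Ne.symm hik, Finset.mem_univ k⟩),
      mul_zero]
  · simp

theorem det_sub_smul_one {R : Type*} [CommRing R] (M : Matrix n n R) (t : R) :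
    (M - t • (1 : Matrix n n R)).det = (-1) ^ Fintype.card n * M.charpoly.eval t := by
  rw [eval_charpoly, ← neg_sub, det_neg, scalar_apply, smul_one_eq_diagonal]

end Matrix

theorem ecp_charpoly {m : ℕ} (hm : 1 ≤ m) (f : Polynomial ℂ)
    (hdeg : f.natDegree = m) (σ : Fin m → ℂ) (hσ : Function.Injective σ)
    (d : Fin m → ℂ)
    (hd : ∀ k, d k = f.eval (σ k) /
        (f.leadingCoeff * ∏ j ∈ Finset.univ.erase k, (σ k - σ j))) :
    (∀ lam : ℂ,
        ((Matrix.diagonal σ - Matrix.of fun (_ i : Fin m) => d i) -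
            lam • (1 : Matrix (Fin m) (Fin m) ℂ)).det =
          (-1 : ℂ) ^ m * f.eval lam / f.leadingCoeff) ∧
    (Matrix.diagonal σ - Matrix.of fun (_ i : Fin m) => d i).charpoly =
      Polynomial.C f.leadingCoeff⁻¹ * f := by
  change (∀ lam : ℂ, ((diagonal σ - replicateRow (Fin m) d) - lam • 1).det = _) ∧
    (diagonal σ - replicateRow (Fin m) d).charpoly = _
  have hf : f ≠ 0 := by rintro rfl; simp at hdeg; omega
  have ha : f.leadingCoeff ≠ 0 := leadingCoeff_ne_zero.mpr hf
  have hchar : (diagonal σ - replicateRow (Fin m) d).charpoly = C f.leadingCoeff⁻¹ * f := by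
    refine eq_of_degree_le_of_eval_index_eq Finset.univ hσ.injOn ?_ ?_ ?_ fun k _ => ?_
    · simp [charpoly_degree_eq_dim]
    · rw [charpoly_degree_eq_dim, degree_C_mul (inv_ne_zero ha), degree_eq_natDegree hf, hdeg,
        Fintype.card_fin]
    · rw [(charpoly_monic _).leadingCoeff, leadingCoeff_mul, leadingCoeff_C, inv_mul_cancel₀ ha]
    · have hnodes : ∏ j ∈ Finset.univ.erase k, (σ k - σ j) ≠ 0 :=
        Finset.prod_ne_zero_iff.mpr fun j hj =>
          sub_ne_zero.mpr (hσ.ne (Finset.ne_of_mem_erase hj).symm)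
      rw [eval_charpoly_diagonal_sub_replicateRow_self, hd k, eval_mul, eval_C]
      field_simp
  refine ⟨fun lam => ?_, hchar⟩
  rw [det_sub_smul_one, hchar, eval_mul, eval_C, Fintype.card_fin]
  ring
end

section
/- Let f ∈ ℂ[X] have degree m ≥ 1, leading coefficient a_m and coefficient a_{m−1} of X^{m−1}, and let σ_1, …, σ_m ∈ ℂ be pairwise distinct. Define the defects d_k = f(σ_k) / (a_m · ∏_{j ≠ k} (σ_k − σ_j)) and the main values H_k = σ_k − d_k. Then the control equation Σ_{j=1}^m H_j = −a_{m−1}/a_m holds. -/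
open Polynomial BigOperators Finset

/- Subtracting `lc f • nodal s v` from `f` leaves a polynomial of degree `< #s` with the same
values at the nodes; by `Lagrange.coeff_eq_sum` its coefficient of `X ^ (#s - 1)` is the
divided-difference sum, while `nodal s v` contributes `-∑ v i` to that coefficient (Vieta). -/
theorem Lagrange.sum_eval_div_prod_of_natDegree_eq_card {F ι : Type*} [Field F] [DecidableEq ι]
    {s : Finset ι} {v : ι → F} (hvs : Set.InjOn v s) (hs : s.Nonempty) {f : F[X]}
    (hf : f.natDegree = #s) :
    ∑ i ∈ s, f.eval (v i) / ∏ j ∈ s.erase i, (v i - v j)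
      = f.coeff (#s - 1) + f.leadingCoeff * ∑ i ∈ s, v i := by
  have hf0 : f ≠ 0 := by rintro rfl; simp [eq_comm, hs.ne_empty] at hf
  set g := f - C f.leadingCoeff * nodal s v
  have hg_degree : g.degree < #s := by
    have hdeg : f.degree = (C f.leadingCoeff * nodal s v).degree := by
      rw [degree_C_mul (leadingCoeff_ne_zero.mpr hf0), degree_nodal, degree_eq_natDegree hf0, hf]
    have hlc : f.leadingCoeff = (C f.leadingCoeff * nodal s v).leadingCoeff := by
      rw [leadingCoeff_mul, leadingCoeff_C, nodal_monic.leadingCoeff, mul_one]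
    simpa [degree_eq_natDegree hf0, hf] using degree_sub_lt_left hdeg hf0 hlc
  have hg_eval : ∀ i ∈ s, g.eval (v i) = f.eval (v i) := fun i hi => by
    simp [g, eval_nodal_at_node hi]
  have hg_coeff : g.coeff (#s - 1) = f.coeff (#s - 1) + f.leadingCoeff * ∑ i ∈ s, v i := by
    rw [coeff_sub, coeff_C_mul, nodal_eq, prod_X_sub_C_coeff_card_pred s v hs.card_pos]
    ring
  rw [← hg_coeff, coeff_eq_sum hvs hg_degree]
  exact sum_congr rfl fun i hi => by rw [hg_eval i hi]

theorem ecp_sum_control {m : ℕ} (hm : 1 ≤ m) (f : Polynomial ℂ)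
    (hdeg : f.natDegree = m) (σ : Fin m → ℂ) (hσ : Function.Injective σ)
    (d H : Fin m → ℂ)
    (hd : ∀ k, d k = f.eval (σ k) /
        (f.leadingCoeff * ∏ j ∈ Finset.univ.erase k, (σ k - σ j)))
    (hH : ∀ k, H k = σ k - d k) :
    ∑ k, H k = -f.coeff (m - 1) / f.leadingCoeff := by
  have hm_card : #(univ : Finset (Fin m)) = m := card_fin m
  have hf0 : f ≠ 0 := by rintro rfl; simp at hdeg; omega
  have hsum := Lagrange.sum_eval_div_prod_of_natDegree_eq_card hσ.injOn
    (univ_nonempty_iff.mpr ⟨⟨0, hm⟩⟩) (hdeg.trans hm_card.symm)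
  rw [hm_card] at hsum
  have hd_sum :
      ∑ k, d k = f.leadingCoeff⁻¹ * (f.coeff (m - 1) + f.leadingCoeff * ∑ k, σ k) := by
    rw [← hsum, mul_sum]
    exact sum_congr rfl fun k _ => by
      rw [hd k, mul_comm f.leadingCoeff, ← div_div, div_eq_inv_mul]
  rw [sum_congr rfl fun k _ => hH k, sum_sub_distrib, hd_sum]
  field_simp [leadingCoeff_ne_zero.mpr hf0]
  ring
end

section
/- Let f be a nonzero polynomial over ℂ and let a ∈ ℂ be a root of f of multiplicity ν ≥ 1. Then the Padé function p(λ) = f(λ)/(−f′(λ)) satisfies p(λ)/(λ − a) → −1/ν as λ → a with λ ≠ a; equivalently, f(λ)/((λ − a)·f′(λ)) tends to 1/ν along the punctured neighborhood filter at a. -/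
open Polynomial Filter

theorem pade_limit_at_root (f : Polynomial ℂ) (hf : f ≠ 0) (a : ℂ)
    (hroot : f.IsRoot a) (ν : ℕ) (hν : 1 ≤ ν)
    (hmult : Polynomial.rootMultiplicity a f = ν) :
    Filter.Tendsto
        (fun x : ℂ => (f.eval x / (-(Polynomial.derivative f).eval x)) / (x - a))
        (nhdsWithin a {a}ᶜ) (nhds (-1 / (ν : ℂ))) ∧
    Filter.Tendsto
        (fun x : ℂ => f.eval x / ((x - a) * (Polynomial.derivative f).eval x))
        (nhdsWithin a {a}ᶜ) (nhds (1 / (ν : ℂ))) := by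
  set g := f /ₘ (X - C a) ^ ν with hg_def
  have hfg : (X - C a) ^ ν * g = f := by
    have := f.pow_mul_divByMonic_rootMultiplicity_eq a
    rwa [hmult] at this
  have hga : g.eval a ≠ 0 := by
    have := Polynomial.eval_divByMonic_pow_rootMultiplicity_ne_zero a hf
    rwa [hmult] at this
  have hν' : (ν : ℂ) ≠ 0 := Nat.cast_ne_zero.mpr (by omega)
  -- evaluations
  have heval : ∀ x : ℂ, f.eval x = (x - a) ^ ν * g.eval x := by
    intro x
    rw [← hfg]; simp
  have hderiv : ∀ x : ℂ, (derivative f).eval x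
      = (ν : ℂ) * (x - a) ^ (ν - 1) * g.eval x + (x - a) ^ ν * (derivative g).eval x := by
    intro x
    rw [← hfg, derivative_mul, derivative_pow, derivative_X_sub_C]
    simp
  -- key eventual equality
  have key : ∀ x : ℂ, x ≠ a →
      f.eval x / ((x - a) * (derivative f).eval x)
      = g.eval x / ((ν : ℂ) * g.eval x + (x - a) * (derivative g).eval x) := by
    intro x hx
    have hxa : x - a ≠ 0 := sub_ne_zero.mpr hx
    have hpow : (x - a) ^ ν ≠ 0 := pow_ne_zero _ hxa
    have hstep : (x - a) * ((ν : ℂ) * (x - a) ^ (ν - 1) * g.eval x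
        + (x - a) ^ ν * (derivative g).eval x)
        = (x - a) ^ ν * ((ν : ℂ) * g.eval x + (x - a) * (derivative g).eval x) := by
      obtain ⟨m, rfl⟩ : ∃ m, ν = m + 1 := ⟨ν - 1, by omega⟩
      simp only [Nat.add_sub_cancel, pow_succ]
      ring
    rw [heval x, hderiv x, hstep, mul_div_mul_left _ _ hpow]
  -- limit of the simplified expression
  have hcont : Tendsto (fun x : ℂ => g.eval x / ((ν : ℂ) * g.eval x + (x - a) * (derivative g).eval x))
      (nhdsWithin a {a}ᶜ) (nhds (1 / (ν : ℂ))) := by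
    have hden : ((ν : ℂ) * g.eval a + (a - a) * (derivative g).eval a) ≠ 0 := by
      rw [sub_self, zero_mul, add_zero]
      exact mul_ne_zero hν' hga
    have h1 : Tendsto (fun x : ℂ => g.eval x / ((ν : ℂ) * g.eval x + (x - a) * (derivative g).eval x))
        (nhds a) (nhds (g.eval a / ((ν : ℂ) * g.eval a + (a - a) * (derivative g).eval a))) := by
      apply Tendsto.div
      · exact (Polynomial.continuous g).continuousAt
      · exact (((continuous_const.mul g.continuous).add
          ((continuous_id.sub continuous_const).mul (derivative g).continuous)).tendsto a)
      · exact hden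
    have heq : g.eval a / ((ν : ℂ) * g.eval a + (a - a) * (derivative g).eval a) = 1 / (ν : ℂ) := by
      rw [sub_self, zero_mul, add_zero]
      rw [div_eq_div_iff (by simp [hν', hga]) hν']
      ring
    rw [heq] at h1
    exact h1.mono_left nhdsWithin_le_nhds
  have h2 : Tendsto (fun x : ℂ => f.eval x / ((x - a) * (derivative f).eval x))
      (nhdsWithin a {a}ᶜ) (nhds (1 / (ν : ℂ))) := by
    apply hcont.congr'
    filter_upwards [self_mem_nhdsWithin] with x hx
    exact (key x hx).symm
  refine ⟨?_, h2⟩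
  have h3 : Tendsto (fun x : ℂ => -(f.eval x / ((x - a) * (derivative f).eval x)))
      (nhdsWithin a {a}ᶜ) (nhds (-(1 / (ν : ℂ)))) := h2.neg
  have heq2 : ∀ x : ℂ, (f.eval x / (-(derivative f).eval x)) / (x - a)
      = -(f.eval x / ((x - a) * (derivative f).eval x)) := by
    intro x
    rw [div_neg, neg_div, div_div, mul_comm]
  have : (-(1 / (ν : ℂ))) = -1 / (ν : ℂ) := by ring
  rw [← this]
  exact h3.congr (fun x => (heq2 x).symm)
end
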